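/- Under linear charging, let a and a' be two station sequences from u to v that coincide from stations s_i = s'_{i'} onwards (with k − i = k' − i' matching tails). Then the state-domination condition (ℓ⃖_{s_i}(ℓ_in), t_b(s_i)(ℓ_in)) ⪰ (ℓ⃖_{s'_{i'}}(ℓ_in), t_b(s'_{i'})(ℓ_in)) for all ℓ_in ∈ [0,M] holds if and only if e_{u,s₁} ≤ e_{u,s'₁} and Σ_{j=1}^{i} (e_{s_{j−1},s_j} + α δ_{s_{j−1},s_j}) ≤ Σ_{j=1}^{i'} (e_{s'_{j−1},s'_j} + α δ_{s'_{j−1},s'_j}). -/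
import Mathlib


/-- The linear-charging state preorder: for finite levels,
(ℓ,t) ⪯ (ℓ',t') iff αt − ℓ ≥ αt' − ℓ'; a state with level −∞ (`none`) is
minimal. -/
def linRel (α : ℝ) : Option ℝ × ℝ → Option ℝ × ℝ → Prop
  | (none, _), _ => True
  | (some _, _), (none, _) => False
  | (some l, t), (some l', t') => α * t' - l' ≤ α * t - l


lemma maxsub (x : ℝ) : max 0 x - max 0 (-x) = x := by
  rcases le_total 0 x with h|h
  · rw [max_eq_right h, max_eq_left (neg_nonpos.mpr h)]; ring
  · rw [max_eq_left h, max_eq_right (neg_nonneg.mpr h)]; ring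

/-- under linear charging and the canonical late-charging
schedule, the state of sequence a at station s_i dominates the state of
sequence a' at station s'_{i'} for every initial level ℓ_in ∈ [0,M] iff
e_{u,s₁} ≤ e_{u,s'₁} and Σ_{j≤i}(e_j + α δ_j) ≤ Σ_{j≤i'}(e'_j + α δ'_j).
Here E, E', D, D' are the prefix sums of energies and travel times. -/
theorem stmt_17 (M α teu : ℝ) (hM : 0 < M) (hα : 0 < α)
    (i i' : ℕ) (hi : 1 ≤ i) (hi' : 1 ≤ i')
    (e e' δ δ' : ℕ → ℝ)
    (he : ∀ j, 0 ≤ e j) (he' : ∀ j, 0 ≤ e' j)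
    (hδ : ∀ j, 0 ≤ δ j) (hδ' : ∀ j, 0 ≤ δ' j)
    (heM : e 1 ≤ M) (he'M : e' 1 ≤ M)
    (E E' D D' : ℝ)
    (hE : E = ∑ j ∈ Finset.Icc 1 i, e j) (hE' : E' = ∑ j ∈ Finset.Icc 1 i', e' j)
    (hD : D = ∑ j ∈ Finset.Icc 1 i, δ j) (hD' : D' = ∑ j ∈ Finset.Icc 1 i', δ' j) :
    (∀ ℓin : ℝ, ℓin ∈ Set.Icc (0:ℝ) M →
      linRel α
        (if e' 1 ≤ ℓin then
          (some (max 0 (ℓin - E')), teu + D' + (max 0 (E' - ℓin)) / α)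
         else (none, teu + D'))
        (if e 1 ≤ ℓin then
          (some (max 0 (ℓin - E)), teu + D + (max 0 (E - ℓin)) / α)
         else (none, teu + D)))
    ↔ (e 1 ≤ e' 1 ∧ E + α * D ≤ E' + α * D') := by

  have hx : ∀ DD EE ℓ : ℝ,
      α * (teu + DD + max 0 (EE - ℓ) / α) - max 0 (ℓ - EE)
        = α * teu + α * DD + EE - ℓ := by
    intro DD EE ℓ
    have h1 : max 0 (ℓ - EE) = max 0 (-(EE - ℓ)) := by ring_nf
    rw [h1, mul_add, mul_add, mul_div_cancel₀ _ (ne_of_gt hα)]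
    have := maxsub (EE - ℓ)
    linarith
  constructor
  · intro h
    have h1 : e 1 ≤ e' 1 := by
      by_contra hc
      push_neg at hc
      have := h (e' 1) ⟨he' 1, he'M⟩
      rw [if_pos le_rfl, if_neg (not_le.mpr hc)] at this
      exact this
    refine ⟨h1, ?_⟩
    have := h M ⟨le_of_lt hM, le_refl M⟩
    rw [if_pos he'M, if_pos heM] at this
    have h2 : α * (teu + D + max 0 (E - M) / α) - max 0 (M - E)
        ≤ α * (teu + D' + max 0 (E' - M) / α) - max 0 (M - E') := this
    rw [hx, hx] at h2
    linarith
  · rintro ⟨h1, h2⟩ ℓ ⟨h0, hMl⟩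
    by_cases hc : e' 1 ≤ ℓ
    · rw [if_pos hc, if_pos (h1.trans hc)]
      show α * (teu + D + max 0 (E - ℓ) / α) - max 0 (ℓ - E)
          ≤ α * (teu + D' + max 0 (E' - ℓ) / α) - max 0 (ℓ - E')
      rw [hx, hx]
      linarith
    · rw [if_neg hc]
      trivial
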